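/- Let G_n be the caterpillar graph on 2n vertices consisting of a path v_1,…,v_n together with, for each i, one leaf u_i adjacent to v_i. Then for n ≥ 2 the Hamiltonian completion number of G_n equals ⌈n/2⌉. -/

import Mathlib

/-- The caterpillar on `2n` vertices: central path `v_0, …, v_{n-1}` (the `Sum.inl` vertices)
with one leaf `u_i` (the vertex `Sum.inr i`) attached to each `v_i`. -/
def caterpillar1 (n : ℕ) : SimpleGraph (Fin n ⊕ Fin n) :=
  SimpleGraph.fromRel (fun a b =>
    match a, b with
    | Sum.inl i, Sum.inl j => i.val + 1 = j.val
    | Sum.inl i, Sum.inr j => i = j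
    | _, _ => False)

open SimpleGraph

namespace CatAux

/-- descending walk in the cycle graph from `j` to `0`. -/
def down (m : ℕ) (hm : 0 < m) : (j : ℕ) → (hj : j < m) → (cycleGraph m).Walk ⟨j, hj⟩ ⟨0, hm⟩
  | 0, _ => .nil
  | (j+1), hj => .cons
      (by
        rw [cycleGraph_adj']
        left
        rw [Fin.sub_def]
        simp only []
        show (m - j + (j + 1)) % m = 1
        have h1 : m - j + (j + 1) = m + 1 := by omega
        rw [h1, Nat.add_mod_left]
        exact Nat.mod_eq_of_lt (by omega))
      (down m hm j (Nat.lt_of_succ_lt hj))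

lemma mem_support_down (m : ℕ) (hm : 0 < m) (j : ℕ) (hj : j < m) (v : Fin m) :
    v ∈ (down m hm j hj).support ↔ v.val ≤ j := by
  induction j with
  | zero => simp [down, Fin.ext_iff, Nat.le_zero]
  | succ j ih =>
    simp only [down, SimpleGraph.Walk.support_cons, List.mem_cons, ih (by omega)]
    constructor
    · rintro (rfl | h)
      · simp
      · omega
    · intro h
      rcases Nat.lt_or_ge v.val (j+1) with h' | h'
      · right; omega
      · left; apply Fin.ext; simp; omega

lemma isPath_down (m : ℕ) (hm : 0 < m) (j : ℕ) (hj : j < m) :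
    (down m hm j hj).IsPath := by
  induction j with
  | zero => simp [down]
  | succ j ih =>
    rw [down, SimpleGraph.Walk.cons_isPath_iff]
    refine ⟨ih (by omega), ?_⟩
    rw [mem_support_down]
    simp

lemma mem_edges_down (m : ℕ) (hm : 0 < m) (j : ℕ) (hj : j < m) (e : Sym2 (Fin m))
    (he : e ∈ (down m hm j hj).edges) :
    ∃ i : ℕ, ∃ h : i < j, e = s(⟨i+1, by omega⟩, ⟨i, by omega⟩) := by
  induction j with
  | zero => simp [down] at he
  | succ j ih =>
    rw [down, SimpleGraph.Walk.edges_cons] at he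
    rcases List.mem_cons.mp he with rfl | h
    · exact ⟨j, by omega, rfl⟩
    · obtain ⟨i, hi, rfl⟩ := ih (by omega) h
      exact ⟨i, by omega, rfl⟩

lemma length_down (m : ℕ) (hm : 0 < m) (j : ℕ) (hj : j < m) :
    (down m hm j hj).length = j := by
  induction j with
  | zero => simp [down]
  | succ j ih => simp [down, ih]

/-- The standard hamiltonian cycle in `cycleGraph m` for `3 ≤ m`. -/
lemma cycleGraph_hamiltonianCycle (m : ℕ) (hm : 3 ≤ m) :
    ∃ c : (cycleGraph m).Walk ⟨0, by omega⟩ ⟨0, by omega⟩, c.IsHamiltonianCycle := by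
  have hm0 : 0 < m := by omega
  have hadj : (cycleGraph m).Adj ⟨0, hm0⟩ ⟨m-1, by omega⟩ := by
    rw [cycleGraph_adj']
    left
    rw [Fin.sub_def]
    simp only []
    show (m - (m - 1) + 0) % m = 1
    have h1 : m - (m - 1) + 0 = 1 := by omega
    rw [h1]
    exact Nat.mod_eq_of_lt (by omega)
  refine ⟨.cons hadj (down m hm0 (m-1) (by omega)), ?_⟩
  rw [SimpleGraph.Walk.isHamiltonianCycle_iff_isCycle_and_support_count_tail_eq_one]
  constructor
  · rw [SimpleGraph.Walk.cons_isCycle_iff]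
    refine ⟨isPath_down m hm0 (m-1) (by omega), ?_⟩
    intro h
    obtain ⟨i, hi, he⟩ := mem_edges_down m hm0 (m-1) (by omega) _ h
    rw [Sym2.eq, Sym2.rel_iff', Prod.mk.injEq, Prod.swap_prod_mk, Prod.mk.injEq,
      Fin.ext_iff, Fin.ext_iff, Fin.ext_iff, Fin.ext_iff] at he
    simp only at he
    omega
  · intro a
    have hmem : a ∈ (down m hm0 (m-1) (by omega)).support := by
      rw [mem_support_down]; omega
    have hnd : (down m hm0 (m-1) (by omega)).support.Nodup :=
      (isPath_down m hm0 (m-1) (by omega)).support_nodup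
    rw [SimpleGraph.Walk.support_cons, List.tail_cons]
    exact List.count_eq_one_of_mem hnd hmem

end CatAux


open SimpleGraph


namespace CatAux

def extraRel (n : ℕ) : (Fin n ⊕ Fin n) → (Fin n ⊕ Fin n) → Prop := fun a b =>
  match a, b with
  | .inr i, .inr j => (Odd i.val ∧ i.val + 1 = j.val) ∨ (Even n ∧ i.val = n-1 ∧ j.val = 0)
  | .inl i, .inr j => ¬ Even n ∧ i.val = n-1 ∧ j.val = 0
  | _, _ => False

def extra (n : ℕ) : SimpleGraph (Fin n ⊕ Fin n) := SimpleGraph.fromRel (extraRel n)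

def bigH (n : ℕ) : SimpleGraph (Fin n ⊕ Fin n) := caterpillar1 n ⊔ extra n

def sig (n : ℕ) (t : Fin (2*n)) : Fin n ⊕ Fin n :=
  if t.val % 4 = 0 ∨ t.val % 4 = 3
  then .inr ⟨t.val/2, by have := t.2; omega⟩
  else .inl ⟨t.val/2, by have := t.2; omega⟩

lemma sig_inj (n : ℕ) : Function.Injective (sig n) := by
  intro s t h
  unfold sig at h
  have hs := s.2; have ht := t.2
  split_ifs at h with h1 h2 h2
  all_goals first
    | (simp only [Sum.inr.injEq, Sum.inl.injEq, Fin.mk.injEq] at h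
       exact Fin.ext (by omega))
    | simp at h

lemma sig_bij (n : ℕ) : Function.Bijective (sig n) := by
  rw [Fintype.bijective_iff_injective_and_card]
  exact ⟨sig_inj n, by simp [two_mul]⟩

lemma bigH_adj_step (n : ℕ) (hn : 2 ≤ n) (v u : Fin (2*n))
    (h : u.val = v.val + 1 ∨ (u.val = 0 ∧ v.val = 2*n - 1)) :
    (bigH n).Adj (sig n v) (sig n u) := by
  have hv := v.2; have hu := u.2
  rcases h with h | ⟨h0, hlast⟩
  · -- successor case
    have h4 : v.val % 4 = 0 ∨ v.val % 4 = 1 ∨ v.val % 4 = 2 ∨ v.val % 4 = 3 := by omega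
    rcases h4 with h4 | h4 | h4 | h4
    · -- inr (t/2) ~ inl (t/2) : caterpillar edge
      rw [sig, if_pos (by omega), sig, if_neg (by omega)]
      apply le_sup_left (α := SimpleGraph (Fin n ⊕ Fin n))
      rw [caterpillar1, SimpleGraph.fromRel_adj]
      refine ⟨by simp, Or.inr ?_⟩
      show (⟨u.val/2, _⟩ : Fin n) = ⟨v.val/2, _⟩
      apply Fin.ext
      simp only
      omega
    · -- inl (t/2) ~ inl (t/2+1)
      rw [sig, if_neg (by omega), sig, if_neg (by omega)]
      apply le_sup_left (α := SimpleGraph (Fin n ⊕ Fin n))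
      rw [caterpillar1, SimpleGraph.fromRel_adj]
      refine ⟨?_, Or.inl ?_⟩
      · simp only [ne_eq, Sum.inl.injEq, Fin.ext_iff]
        omega
      · show v.val / 2 + 1 = u.val / 2
        omega
    · -- inl (t/2) ~ inr (t/2)
      rw [sig, if_neg (by omega), sig, if_pos (by omega)]
      apply le_sup_left (α := SimpleGraph (Fin n ⊕ Fin n))
      rw [caterpillar1, SimpleGraph.fromRel_adj]
      refine ⟨by simp, Or.inl ?_⟩
      show (⟨v.val/2, _⟩ : Fin n) = ⟨u.val/2, _⟩
      apply Fin.ext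
      simp only
      omega
    · -- inr (t/2) ~ inr (t/2+1) : extra edge
      rw [sig, if_pos (by omega), sig, if_pos (by omega)]
      apply le_sup_right (α := SimpleGraph (Fin n ⊕ Fin n))
      rw [extra, SimpleGraph.fromRel_adj]
      refine ⟨?_, Or.inl (Or.inl ⟨?_, ?_⟩)⟩
      · simp only [ne_eq, Sum.inr.injEq, Fin.ext_iff]
        omega
      · show Odd (v.val / 2)
        rw [Nat.odd_iff]
        omega
      · show v.val / 2 + 1 = u.val / 2
        omega
  · -- wrap case
    rcases Nat.even_or_odd n with hpar | hpar
    · obtain ⟨a, rfl⟩ := hpar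
      rw [sig, if_pos (by omega), sig, if_pos (by omega)]
      apply le_sup_right (α := SimpleGraph (Fin _ ⊕ Fin _))
      rw [extra, SimpleGraph.fromRel_adj]
      refine ⟨?_, Or.inl (Or.inr ⟨⟨a, rfl⟩, ?_, ?_⟩)⟩
      · simp only [ne_eq, Sum.inr.injEq, Fin.ext_iff]
        omega
      · show v.val / 2 = a + a - 1
        omega
      · show u.val / 2 = 0
        omega
    · obtain ⟨a, rfl⟩ := hpar
      rw [sig, if_neg (by omega), sig, if_pos (by omega)]
      apply le_sup_right (α := SimpleGraph (Fin _ ⊕ Fin _))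
      rw [extra, SimpleGraph.fromRel_adj]
      refine ⟨by simp, Or.inl ⟨?_, ?_, ?_⟩⟩
      · rw [Nat.even_iff]; omega
      · show v.val / 2 = 2*a + 1 - 1
        omega
      · show u.val / 2 = 0
        omega

def sigHom (n : ℕ) (hn : 2 ≤ n) : cycleGraph (2*n) →g bigH n where
  toFun := sig n
  map_rel' := by
    intro u v huv
    rw [cycleGraph_adj'] at huv
    have key : ∀ s t : Fin (2*n), (t - s).val = 1 → (bigH n).Adj (sig n s) (sig n t) := by
      intro s t hst
      rw [Fin.sub_def] at hst
      simp only at hst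
      have hs := s.2; have ht := t.2
      apply bigH_adj_step n hn
      rcases Nat.lt_or_ge (2*n - s.val + t.val) (2*n) with hlt | hge
      · rw [Nat.mod_eq_of_lt hlt] at hst
        omega
      · rw [Nat.mod_eq_sub_mod hge, Nat.mod_eq_of_lt (by omega)] at hst
        omega
    rcases huv with h | h
    · exact (key v u h).symm
    · exact key u v h

lemma bigH_isHamiltonian (n : ℕ) (hn : 2 ≤ n) : (bigH n).IsHamiltonian := by
  intro _
  obtain ⟨c, hc⟩ := CatAux.cycleGraph_hamiltonianCycle (2*n) (by omega)
  exact ⟨_, c.map (sigHom n hn), hc.map (sig_bij n)⟩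

end CatAux
namespace CatAux

def gEdge (n : ℕ) (hn : 2 ≤ n) (k : ℕ) : Sym2 (Fin n ⊕ Fin n) :=
  if h : 2*k+2 < n then s(.inr ⟨2*k+1, by omega⟩, .inr ⟨2*k+2, h⟩)
  else if Even n then s(.inr ⟨n-1, by omega⟩, .inr ⟨0, by omega⟩)
  else s(.inl ⟨n-1, by omega⟩, .inr ⟨0, by omega⟩)

lemma extra_edgeSet (n : ℕ) (hn : 2 ≤ n) :
    (extra n).edgeSet = gEdge n hn '' (Set.Iio ((n+1)/2)) := by
  have haux : ∀ a b : Fin n ⊕ Fin n, extraRel n a b → a ≠ b →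
      s(a, b) ∈ gEdge n hn '' (Set.Iio ((n+1)/2)) := by
    intro a b hr hne
    rcases a with i | i <;> rcases b with j | j <;> simp only [extraRel] at hr
    · -- inl i, inr j : odd wrap edge
      obtain ⟨hodd, hi, hj⟩ := hr
      have hn2 : ¬ Even n := hodd
      rw [Nat.even_iff] at hn2
      refine ⟨(n-1)/2, by simp only [Set.mem_Iio]; omega, ?_⟩
      rw [gEdge, dif_neg (by omega), if_neg hodd]
      have e1 : (⟨n-1, by omega⟩ : Fin n) = i := Fin.ext (by simp only; omega)
      have e2 : (⟨0, by omega⟩ : Fin n) = j := Fin.ext (by simp only; omega)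
      rw [e1, e2]
    · rcases hr with ⟨hodd, hij⟩ | ⟨heven, hi, hj⟩
      · -- pairing edge
        rw [Nat.odd_iff] at hodd
        have hj2 := j.2
        refine ⟨i.val/2, by simp only [Set.mem_Iio]; omega, ?_⟩
        rw [gEdge, dif_pos (by omega)]
        have e1 : (⟨2*(i.val/2)+1, by omega⟩ : Fin n) = i := Fin.ext (by simp only; omega)
        have e2 : (⟨2*(i.val/2)+2, by omega⟩ : Fin n) = j := Fin.ext (by simp only; omega)
        rw [e1, e2]
      · -- even wrap edge
        have he := heven
        rw [Nat.even_iff] at he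
        refine ⟨(n-1)/2, by simp only [Set.mem_Iio]; omega, ?_⟩
        rw [gEdge, dif_neg (by omega), if_pos heven]
        have e1 : (⟨n-1, by omega⟩ : Fin n) = i := Fin.ext (by simp only; omega)
        have e2 : (⟨0, by omega⟩ : Fin n) = j := Fin.ext (by simp only; omega)
        rw [e1, e2]
  ext e
  induction e using Sym2.ind with
  | _ a b =>
    constructor
    · intro h
      rw [SimpleGraph.mem_edgeSet, extra, SimpleGraph.fromRel_adj] at h
      obtain ⟨hne, hr | hr⟩ := h
      · exact haux a b hr hne
      · rw [Sym2.eq_swap]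
        exact haux b a hr hne.symm
    · rintro ⟨k, hk, hgk⟩
      simp only [Set.mem_Iio] at hk
      rw [← hgk]
      by_cases h2 : 2*k+2 < n
      · rw [gEdge, dif_pos h2, SimpleGraph.mem_edgeSet, extra, SimpleGraph.fromRel_adj]
        refine ⟨by simp only [ne_eq, Sum.inr.injEq, Fin.mk.injEq]; omega,
          Or.inl (Or.inl ⟨⟨k, rfl⟩, rfl⟩)⟩
      · rcases Nat.even_or_odd n with he | ho
        · have he' := he
          rw [Nat.even_iff] at he'
          rw [gEdge, dif_neg h2, if_pos he, SimpleGraph.mem_edgeSet, extra,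
            SimpleGraph.fromRel_adj]
          exact ⟨by simp only [ne_eq, Sum.inr.injEq, Fin.mk.injEq]; omega,
            Or.inl (Or.inr ⟨he, by simp only, by simp only⟩)⟩
        · have ho' := ho
          rw [Nat.odd_iff] at ho'
          rw [gEdge, dif_neg h2, if_neg (by rwa [Nat.not_even_iff_odd]),
            SimpleGraph.mem_edgeSet, extra, SimpleGraph.fromRel_adj]
          exact ⟨by simp, Or.inl ⟨by rwa [Nat.not_even_iff_odd], by simp only, by simp only⟩⟩

lemma gEdge_injOn (n : ℕ) (hn : 2 ≤ n) : Set.InjOn (gEdge n hn) (Set.Iio ((n+1)/2)) := by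
  intro k hk k' hk' h
  simp only [Set.mem_Iio] at hk hk'
  by_cases h1 : 2*k+2 < n <;> by_cases h2 : 2*k'+2 < n
  · rw [gEdge, dif_pos h1, gEdge, dif_pos h2, Sym2.eq, Sym2.rel_iff', Prod.mk.injEq,
      Prod.swap_prod_mk, Prod.mk.injEq, Sum.inr.injEq, Sum.inr.injEq, Fin.mk.injEq,
      Fin.mk.injEq, Sum.inr.injEq, Sum.inr.injEq, Fin.mk.injEq, Fin.mk.injEq] at h
    omega
  · exfalso
    rw [gEdge, dif_pos h1, gEdge, dif_neg h2] at h
    split_ifs at h <;>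
      (rw [Sym2.eq, Sym2.rel_iff', Prod.mk.injEq, Prod.swap_prod_mk, Prod.mk.injEq] at h;
       simp only [Sum.inr.injEq, Sum.inl.injEq, Fin.mk.injEq, reduceCtorEq, false_and,
         and_false, or_self, or_false, false_or, and_self] at h <;> omega)
  · exfalso
    rw [gEdge, dif_neg h1, gEdge, dif_pos h2] at h
    split_ifs at h <;>
      (rw [Sym2.eq, Sym2.rel_iff', Prod.mk.injEq, Prod.swap_prod_mk, Prod.mk.injEq] at h;
       simp only [Sum.inr.injEq, Sum.inl.injEq, Fin.mk.injEq, reduceCtorEq, false_and,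
         and_false, or_self, or_false, false_or, and_self] at h <;> omega)
  · omega

lemma extra_edgeSet_ncard (n : ℕ) (hn : 2 ≤ n) :
    (extra n).edgeSet.ncard = (n+1)/2 := by
  rw [extra_edgeSet n hn, Set.ncard_image_of_injOn (gEdge_injOn n hn)]
  rw [← Finset.coe_Iio, Set.ncard_coe_finset, Nat.card_Iio]

end CatAux
namespace CatAux

lemma not_cat_of_extra (n : ℕ) (hn : 2 ≤ n) {a b : Fin n ⊕ Fin n}
    (h : (extra n).Adj a b) : ¬ (caterpillar1 n).Adj a b := by
  intro hc
  rw [extra, SimpleGraph.fromRel_adj] at h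
  rw [caterpillar1, SimpleGraph.fromRel_adj] at hc
  obtain ⟨-, hr⟩ := h
  obtain ⟨-, hc⟩ := hc
  rcases a with i | i <;> rcases b with j | j
  · simp only [extraRel, or_self] at hr
  · simp only [extraRel, false_or, or_false] at hr hc
    rw [Fin.ext_iff] at hc
    obtain ⟨-, hi, hj⟩ := hr
    omega
  · simp only [extraRel, false_or, or_false] at hr hc
    rw [Fin.ext_iff] at hc
    obtain ⟨-, hj, hi⟩ := hr
    omega
  · simp only [extraRel, or_self] at hc

lemma bigH_sdiff (n : ℕ) (hn : 2 ≤ n) :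
    (bigH n).edgeSet \ (caterpillar1 n).edgeSet = (extra n).edgeSet := by
  rw [bigH, SimpleGraph.edgeSet_sup]
  ext e
  induction e using Sym2.ind with
  | _ a b =>
    simp only [Set.mem_diff, Set.mem_union, SimpleGraph.mem_edgeSet]
    constructor
    · rintro ⟨h1 | h1, h2⟩
      · exact absurd h1 h2
      · exact h1
    · intro h
      exact ⟨Or.inr h, not_cat_of_extra n hn h⟩

lemma getVert_support {V : Type*} {G : SimpleGraph V} {u v : V} (p : G.Walk u v) :
    ∀ (i : ℕ), i ≤ p.length → p.support[i]? = some (p.getVert i) := by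
  induction p with
  | nil =>
    intro i hi
    simp only [SimpleGraph.Walk.length_nil, Nat.le_zero] at hi
    subst hi
    simp
  | cons h q ih =>
    intro i hi
    cases i with
    | zero => simp
    | succ i =>
      rw [SimpleGraph.Walk.support_cons, List.getElem?_cons_succ,
        SimpleGraph.Walk.getVert_cons_succ]
      exact ih i (by simpa using hi)

lemma cycle_two_nbrs {V : Type*} {H : SimpleGraph V} {v : V} {p : H.Walk v v}
    (hp : p.IsCycle) :
    H.Adj v (p.getVert 1) ∧ H.Adj v (p.getVert (p.length - 1)) ∧
      p.getVert 1 ≠ p.getVert (p.length - 1) := by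
  have h3 := hp.three_le_length
  have hnn : ¬ p.Nil := hp.not_nil
  have hrevnn : ¬ p.reverse.Nil := by
    rw [SimpleGraph.Walk.nil_iff_length_eq, SimpleGraph.Walk.length_reverse]
    omega
  refine ⟨p.adj_snd hnn, ?_, ?_⟩
  · have : H.Adj v (p.reverse.getVert 1) := p.reverse.adj_snd hrevnn
    rwa [SimpleGraph.Walk.getVert_reverse] at this
  · intro heq
    have hnd : p.support.tail.Nodup := hp.support_nodup
    have e1 : p.support.tail[0]? = some (p.getVert 1) := by
      rw [SimpleGraph.Walk.support_eq_cons, List.tail_cons]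
      have := getVert_support p 1 (by omega)
      rwa [SimpleGraph.Walk.support_eq_cons, List.getElem?_cons_succ] at this
    have e2 : p.support.tail[p.length - 2]? = some (p.getVert (p.length - 1)) := by
      rw [SimpleGraph.Walk.support_eq_cons, List.tail_cons]
      have := getVert_support p (p.length - 1) (by omega)
      rw [SimpleGraph.Walk.support_eq_cons] at this
      have h12 : p.length - 1 = (p.length - 2) + 1 := by omega
      rw [h12, List.getElem?_cons_succ] at this
      rwa [← h12] at this  -- careful
    have hlen : p.support.tail.length = p.length := by
      have := SimpleGraph.Walk.length_support p
      have := List.length_tail (l := p.support)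
      omega
    have h0 : 0 < p.support.tail.length := by omega
    have := (List.getElem?_inj (i := 0) (j := p.length - 2) h0 hnd).mp
      (by rw [e1, e2, heq])
    omega

lemma cat_adj_inr (n : ℕ) {i : Fin n} {b : Fin n ⊕ Fin n}
    (h : (caterpillar1 n).Adj (Sum.inr i) b) : b = Sum.inl i := by
  rw [caterpillar1, SimpleGraph.fromRel_adj] at h
  obtain ⟨hne, hr⟩ := h
  rcases b with j | j
  · simp only [false_or, or_false] at hr
    simp [hr]
  · simp only [or_self] at hr

lemma lower_bound (n : ℕ) (hn : 2 ≤ n) (H : SimpleGraph (Fin n ⊕ Fin n))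
    (hle : caterpillar1 n ≤ H) (hham : H.IsHamiltonian) :
    (n+1)/2 ≤ (H.edgeSet \ (caterpillar1 n).edgeSet).ncard := by
  classical
  obtain ⟨a, p, hp⟩ := hham (by simp only [Fintype.card_sum, Fintype.card_fin]; omega)
  set S := H.edgeSet \ (caterpillar1 n).edgeSet with hS
  have hSfin : S.Finite := Set.toFinite _
  have hchoice : ∀ i : Fin n, ∃ e, e ∈ S ∧ (Sum.inr i : Fin n ⊕ Fin n) ∈ e := by
    intro i
    have hv : (Sum.inr i : Fin n ⊕ Fin n) ∈ p.support := hp.mem_support _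
    have hq : (p.rotate _ hv).IsCycle := hp.isCycle.rotate hv
    obtain ⟨h1, h2, hne⟩ := cycle_two_nbrs hq
    rcases eq_or_ne ((p.rotate _ hv).getVert 1) (Sum.inl i) with he | he
    · refine ⟨s(Sum.inr i, (p.rotate _ hv).getVert ((p.rotate _ hv).length - 1)),
        ⟨h2, ?_⟩, Sym2.mem_mk_left _ _⟩
      intro hc
      rw [SimpleGraph.mem_edgeSet] at hc
      exact hne (he.trans (cat_adj_inr n hc).symm)
    · exact ⟨s(Sum.inr i, (p.rotate _ hv).getVert 1),
        ⟨h1, fun hc => he (cat_adj_inr n ((SimpleGraph.mem_edgeSet (G := caterpillar1 n)).mp hc))⟩,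
        Sym2.mem_mk_left _ _⟩
  choose f hf1 hf2 using hchoice
  have key : (Finset.univ : Finset (Fin n)).card ≤ 2 * (Finset.univ.image f).card := by
    apply Finset.card_le_mul_card_image
    intro e _
    induction e using Sym2.ind with
    | _ x y =>
      have hsub : (Finset.univ.filter fun i => f i = s(x, y)) ⊆
          Finset.univ.filter (fun i => (Sum.inr i : Fin n ⊕ Fin n) = x ∨ Sum.inr i = y) := by
        intro i hi
        simp only [Finset.mem_filter, Finset.mem_univ, true_and] at hi ⊢
        have := hf2 i
        rw [hi, Sym2.mem_iff] at this
        exact this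
      refine (Finset.card_le_card hsub).trans ?_
      have hinj : Set.InjOn (fun i : Fin n => (Sum.inr i : Fin n ⊕ Fin n))
          (Finset.univ.filter (fun i => (Sum.inr i : Fin n ⊕ Fin n) = x ∨ Sum.inr i = y)) := by
        intro i _ j _ hij
        exact Sum.inr.inj hij
      have hmaps : ∀ i ∈ Finset.univ.filter
          (fun i => (Sum.inr i : Fin n ⊕ Fin n) = x ∨ Sum.inr i = y),
          (Sum.inr i : Fin n ⊕ Fin n) ∈ ({x, y} : Finset (Fin n ⊕ Fin n)) := by
        intro i hi
        simp only [Finset.mem_filter, Finset.mem_univ, true_and] at hi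
        simpa using hi
      refine (Finset.card_le_card_of_injOn _ hmaps hinj).trans ?_
      exact (Finset.card_insert_le _ _).trans (by simp)
  have himg : Finset.univ.image f ⊆ hSfin.toFinset := by
    intro e he
    obtain ⟨i, _, rfl⟩ := Finset.mem_image.mp he
    rw [Set.Finite.mem_toFinset]
    exact hf1 i
  have hcard : S.ncard = hSfin.toFinset.card := Set.ncard_eq_toFinset_card S hSfin
  have : n ≤ 2 * hSfin.toFinset.card := by
    calc n = (Finset.univ : Finset (Fin n)).card := by simp
    _ ≤ 2 * (Finset.univ.image f).card := key
    _ ≤ 2 * hSfin.toFinset.card := by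
        exact Nat.mul_le_mul_left 2 (Finset.card_le_card himg)
  omega

end CatAux

/-- the Hamiltonian completion number of the caterpillar with one leaf per
path vertex equals `⌈n/2⌉`. -/
theorem caterpillar1_hamiltonianCompletion (n : ℕ) (hn : 2 ≤ n) :
    IsLeast {k : ℕ | ∃ H : SimpleGraph (Fin n ⊕ Fin n), caterpillar1 n ≤ H ∧
      H.IsHamiltonian ∧ (H.edgeSet \ (caterpillar1 n).edgeSet).ncard = k} ((n + 1) / 2) := by
  constructor
  · exact ⟨CatAux.bigH n, le_sup_left, CatAux.bigH_isHamiltonian n hn, by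
      rw [CatAux.bigH_sdiff n hn]; exact CatAux.extra_edgeSet_ncard n hn⟩
  · rintro k ⟨H, hle, hham, rfl⟩
    exact CatAux.lower_bound n hn H hle hham
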